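/- arXiv:1805.03041 — 2 statements merged into one kernel-verified Lean document; each statement's English description precedes it below -/
import Mathlib

section
/- Let p : (E,κ) → (B,λ) be a (κ,λ)-continuous surjection between digital images with the unique path lifting property. If e ∈ E and b ∈ B are such that p(e) and b are λ-adjacent, then there is a unique element e' ∈ p⁻¹(b) such that e is κ-adjacent to e'. (Proposition 3.4(iv)) -/
open Set

/-- 2-adjacency on `ℤ` (the `l₁`-adjacency on `ℤ`): `x` and `y` are distinct with `|x - y| = 1`. -/
def adj2 (x y : ℤ) : Prop := |x - y| = 1

/-- 8-adjacency on `ℤ²` (the `l₂`-adjacency on `ℤ²`). -/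
def adj8 (p q : ℤ × ℤ) : Prop := p ≠ q ∧ |p.1 - q.1| ≤ 1 ∧ |p.2 - q.2| ≤ 1

/-- 26-adjacency on `ℤ³` (the `l₃`-adjacency on `ℤ³`). -/
def adj26 (p q : ℤ × ℤ × ℤ) : Prop :=
  p ≠ q ∧ |p.1 - q.1| ≤ 1 ∧ |p.2.1 - q.2.1| ≤ 1 ∧ |p.2.2 - q.2.2| ≤ 1

/-- An adjacency relation (as any `l_u`-adjacency is) is symmetric and irreflexive. -/
def IsAdjacency {A : Type*} (κ : A → A → Prop) : Prop := Symmetric κ ∧ Irreflexive κ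

/-- `f` is `(κ,λ)`-continuous on `X`: κ-adjacent points are mapped to equal or λ-adjacent
points. -/
def DigContOn {A B : Type*} (f : A → B) (X : Set A)
    (κ : A → A → Prop) (lam : B → B → Prop) : Prop :=
  ∀ x₀ ∈ X, ∀ x₁ ∈ X, κ x₀ x₁ → f x₀ = f x₁ ∨ lam (f x₀) (f x₁)

/-- `f : [0,m]_ℤ → X` is a digital `κ`-path of length `m` in `X`,
i.e. a `(2,κ)`-continuous map on `[0,m]_ℤ` with values in `X`. -/
def IsDigPath {A : Type*} (X : Set A) (κ : A → A → Prop) (m : ℕ) (f : ℤ → A) : Prop :=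
  (∀ i ∈ Icc (0 : ℤ) (m : ℤ), f i ∈ X) ∧
  ∀ i ∈ Icc (0 : ℤ) (m : ℤ), ∀ j ∈ Icc (0 : ℤ) (m : ℤ),
    adj2 i j → f i = f j ∨ κ (f i) (f j)

/-- There is a digital `κ`-path of length `m` in `X` from `x` to `y`. -/
def ReachIn {A : Type*} (X : Set A) (κ : A → A → Prop) (x y : A) (m : ℕ) : Prop :=
  ∃ f : ℤ → A, IsDigPath X κ m f ∧ f 0 = x ∧ f (m : ℤ) = y

/-- `X` is `κ`-connected: every two of its points are joined by a `κ`-path in `X`. -/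
def DigConnected {A : Type*} (X : Set A) (κ : A → A → Prop) : Prop :=
  ∀ x ∈ X, ∀ y ∈ X, ∃ m : ℕ, ReachIn X κ x y m

/-- The `κ`-neighborhood `N_κ(e₀, ε)` of `e₀` in `X` with radius `ε`:
points of `X` whose shortest `κ`-path distance from `e₀` is at most `ε`, together with `e₀`. -/
def Nbhd {A : Type*} (X : Set A) (κ : A → A → Prop) (e₀ : A) (ε : ℕ) : Set A :=
  {e ∈ X | ∃ m : ℕ, m ≤ ε ∧ ReachIn X κ e₀ e m} ∪ {e₀}

/-- The restriction of `f` to `X` is a `(κ,λ)`-isomorphism onto `Y`: a `(κ,λ)`-continuous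
bijection of `X` onto `Y` whose inverse is `(λ,κ)`-continuous. -/
def IsDigIsoOn {A B : Type*} (f : A → B) (X : Set A) (Y : Set B)
    (κ : A → A → Prop) (lam : B → B → Prop) : Prop :=
  MapsTo f X Y ∧ InjOn f X ∧ SurjOn f X Y ∧ DigContOn f X κ lam ∧
  ∀ x₀ ∈ X, ∀ x₁ ∈ X, lam (f x₀) (f x₁) → x₀ = x₁ ∨ κ x₀ x₁

/-- `p` is a radius-`n` digital `(κ,λ)`-covering map of `E` onto `Bs`
(`n = 1` gives the usual digital `(κ,λ)`-covering map): a `(κ,λ)`-continuous surjection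
such that for each `b ∈ Bs` there is a set `F` of points of the fiber over `b` whose radius-`n`
neighborhoods are pairwise disjoint, partition `p⁻¹(N_λ(b,n))`, and are each mapped
isomorphically onto `N_λ(b,n)` by `p`. -/
def IsRadiusCovering {A B : Type*} (p : A → B) (E : Set A) (Bs : Set B)
    (κ : A → A → Prop) (lam : B → B → Prop) (n : ℕ) : Prop :=
  MapsTo p E Bs ∧ SurjOn p E Bs ∧ DigContOn p E κ lam ∧
  ∀ b ∈ Bs, ∃ F : Set A, F ⊆ {e ∈ E | p e = b} ∧
    (E ∩ p ⁻¹' (Nbhd Bs lam b n) = ⋃ e ∈ F, Nbhd E κ e n) ∧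
    F.Pairwise (fun e e' => Disjoint (Nbhd E κ e n) (Nbhd E κ e' n)) ∧
    ∀ e ∈ F, IsDigIsoOn p (Nbhd E κ e n) (Nbhd Bs lam b n) κ lam

/-- `p` is a radius-`n` local `(κ,λ)`-isomorphism (`n = 1` gives the usual local
`(κ,λ)`-isomorphism): for every `e ∈ E` the restriction of `p` to `N_κ(e,n)` is a
`(κ,λ)`-isomorphism onto `N_λ(p e, n)`. -/
def IsLocalIso {A B : Type*} (p : A → B) (E : Set A) (Bs : Set B)
    (κ : A → A → Prop) (lam : B → B → Prop) (n : ℕ) : Prop :=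
  ∀ e ∈ E, IsDigIsoOn p (Nbhd E κ e n) (Nbhd Bs lam (p e) n) κ lam

/-- `p` has the digital path lifting property: every `λ`-path `a` in `Bs` and every point
`e ∈ E` of the fiber over `a 0` admit a lifting of `a` beginning at `e`. -/
def PathLiftingProp {A B : Type*} (p : A → B) (E : Set A) (Bs : Set B)
    (κ : A → A → Prop) (lam : B → B → Prop) : Prop :=
  ∀ (m : ℕ) (a : ℤ → B), IsDigPath Bs lam m a → ∀ e ∈ E, p e = a 0 →
    ∃ g : ℤ → A, IsDigPath E κ m g ∧ (∀ i ∈ Icc (0 : ℤ) (m : ℤ), p (g i) = a i) ∧ g 0 = e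

/-- `p` has the uniqueness of digital path lifts property: two `κ`-paths in `E` with the
same projection and the same starting point coincide (on their domain `[0,m]_ℤ`). -/
def UniqLiftsProp {A B : Type*} (p : A → B) (E : Set A) (κ : A → A → Prop) : Prop :=
  ∀ (m : ℕ) (a b : ℤ → A), IsDigPath E κ m a → IsDigPath E κ m b →
    (∀ i ∈ Icc (0 : ℤ) (m : ℤ), p (a i) = p (b i)) → a 0 = b 0 →
    EqOn a b (Icc (0 : ℤ) (m : ℤ))

/-- `p` has the unique path lifting property (u.p.l.): both the path lifting property and
the uniqueness of path lifts property. -/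
def UPL {A B : Type*} (p : A → B) (E : Set A) (Bs : Set B)
    (κ : A → A → Prop) (lam : B → B → Prop) : Prop :=
  PathLiftingProp p E Bs κ lam ∧ UniqLiftsProp p E κ

/-- `e` is a conciliator point for `p`: there are `e', e'' ∈ N_κ(e,1)` which are not
`κ`-adjacent but whose images are `λ`-adjacent. -/
def IsConciliator {A B : Type*} (p : A → B) (E : Set A)
    (κ : A → A → Prop) (lam : B → B → Prop) (e : A) : Prop :=
  ∃ e' ∈ Nbhd E κ e 1, ∃ e'' ∈ Nbhd E κ e 1, ¬ κ e' e'' ∧ lam (p e') (p e'')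

/-- `f : [0,m]_ℤ → X` is a simple `κ`-loop of length `m` in `X`: a closed `κ`-path such that
`f 0, …, f (m-1)` are pairwise distinct and `f i`, `f j` are `κ`-adjacent iff
`j = i ± 1 (mod m)`. -/
def IsSimpleLoop {A : Type*} (X : Set A) (κ : A → A → Prop) (m : ℕ) (f : ℤ → A) : Prop :=
  IsDigPath X κ m f ∧ f 0 = f (m : ℤ) ∧
  (∀ i ∈ Ico (0 : ℤ) (m : ℤ), ∀ j ∈ Ico (0 : ℤ) (m : ℤ), f i = f j → i = j) ∧
  ∀ i ∈ Ico (0 : ℤ) (m : ℤ), ∀ j ∈ Ico (0 : ℤ) (m : ℤ),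
    (κ (f i) (f j) ↔ (j % (m : ℤ) = (i + 1) % (m : ℤ) ∨ j % (m : ℤ) = (i - 1) % (m : ℤ)))

/-! Lift the one-step path from `p e` to `b` starting at `e`: its endpoint lies over `b` and is
adjacent to `e`, since `p e ≠ b`. Two such points `e'`, `e''` give one-step paths `e → e'` and
`e → e''` with the same projection, so uniqueness of lifts forces `e' = e''`. -/

section EdgePath

variable {A B : Type*}

def edgePath (x y : A) (i : ℤ) : A := if i ≤ 0 then x else y

@[simp] lemma edgePath_zero (x y : A) : edgePath x y 0 = x := if_pos le_rfl

@[simp] lemma edgePath_one (x y : A) : edgePath x y 1 = y := if_neg (by norm_num)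

lemma apply_edgePath (f : A → B) (x y : A) (i : ℤ) :
    f (edgePath x y i) = edgePath (f x) (f y) i :=
  apply_ite f _ _ _

lemma adj2_of_mem_Icc_zero_one {i j : ℤ} (hi : i ∈ Icc (0 : ℤ) 1) (hj : j ∈ Icc (0 : ℤ) 1)
    (hij : adj2 i j) : (i = 0 ∧ j = 1) ∨ (i = 1 ∧ j = 0) := by
  rw [adj2, abs_eq zero_le_one] at hij
  rw [mem_Icc] at hi hj
  omega

lemma isDigPath_edgePath {X : Set A} {κ : A → A → Prop} (hκ : ∀ ⦃x y⦄, κ x y → κ y x) {x y : A}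
    (hx : x ∈ X) (hy : y ∈ X) (hxy : κ x y) : IsDigPath X κ 1 (edgePath x y) := by
  refine ⟨fun i _ => ?_, fun i hi j hj hij => Or.inr ?_⟩
  · unfold edgePath
    split_ifs <;> assumption
  · rcases adj2_of_mem_Icc_zero_one hi hj hij with ⟨rfl, rfl⟩ | ⟨rfl, rfl⟩
    · simpa using hxy
    · simpa using hκ hxy

end EdgePath

section Lifting

variable {A B : Type*} {p : A → B} {E : Set A} {Bs : Set B}
  {κ : A → A → Prop} {lam : B → B → Prop}

lemma PathLiftingProp.exists_adj_mem_fiber (hlift : PathLiftingProp p E Bs κ lam)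
    (hlam : IsAdjacency lam) (hmaps : MapsTo p E Bs) {e : A} {b : B} (he : e ∈ E)
    (hb : b ∈ Bs) (hadj : lam (p e) b) : ∃ e' ∈ E, p e' = b ∧ κ e e' := by
  obtain ⟨g, hg, hpg, hg0⟩ :=
    hlift 1 _ (isDigPath_edgePath hlam.1 (hmaps he) hb hadj) e he (edgePath_zero (p e) b)
  have hpg1 : p (g 1) = b := by simpa using hpg 1 (by simp)
  refine ⟨g 1, hg.1 1 (by simp), hpg1, ?_⟩
  rcases hg.2 0 (by simp) 1 (by simp) (by simp [adj2]) with h | h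
  · rw [hg0] at h
    exact absurd (h ▸ hpg1 ▸ hadj) (hlam.2 _)
  · rwa [hg0] at h

lemma UniqLiftsProp.eq_of_adj_of_apply_eq (huniq : UniqLiftsProp p E κ)
    (hκ : ∀ ⦃x y⦄, κ x y → κ y x)
    {e e' e'' : A} (he : e ∈ E) (he' : e' ∈ E) (he'' : e'' ∈ E) (h' : κ e e') (h'' : κ e e'')
    (hp : p e' = p e'') : e' = e'' := by
  have hproj : ∀ i ∈ Icc (0 : ℤ) ((1 : ℕ) : ℤ), p (edgePath e e' i) = p (edgePath e e'' i) :=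
    fun i _ => by rw [apply_edgePath p, apply_edgePath p, hp]
  simpa using huniq 1 _ _ (isDigPath_edgePath hκ he he' h') (isDigPath_edgePath hκ he he'' h'')
    hproj (by simp) (by simp : (1 : ℤ) ∈ Icc (0 : ℤ) ((1 : ℕ) : ℤ))

end Lifting

theorem prop_3_4_iv_general {N M : ℕ} (E : Set (Fin N → ℤ)) (Bs : Set (Fin M → ℤ))
    (κ : (Fin N → ℤ) → (Fin N → ℤ) → Prop) (lam : (Fin M → ℤ) → (Fin M → ℤ) → Prop)
    (hκ : IsAdjacency κ) (hlam : IsAdjacency lam)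
    (p : (Fin N → ℤ) → (Fin M → ℤ))
    (hmaps : Set.MapsTo p E Bs)
    (hupl : UPL p E Bs κ lam)
    (e : Fin N → ℤ) (b : Fin M → ℤ) (he : e ∈ E) (hb : b ∈ Bs)
    (hladj : lam (p e) b) :
    ∃! e' : Fin N → ℤ, e' ∈ E ∧ p e' = b ∧ κ e e' := by
  obtain ⟨e', he', hpe', hee'⟩ := hupl.1.exists_adj_mem_fiber hlam hmaps he hb hladj
  refine ⟨e', ⟨he', hpe', hee'⟩, fun e'' ⟨he'', hpe'', hee''⟩ => ?_⟩
  exact (hupl.2.eq_of_adj_of_apply_eq hκ.1 he he' he'' hee' hee'' (hpe'.trans hpe''.symm)).symm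

/-- Proposition 3.4(iv): if `p` is a `(κ,λ)`-continuous surjection between digital images
with the unique path lifting property and `p e`, `b` are `λ`-adjacent, then there is a
unique `e' ∈ p⁻¹(b)` with `e` `κ`-adjacent to `e'`. -/
theorem prop_3_4_iv {N M : ℕ} (E : Set (Fin N → ℤ)) (Bs : Set (Fin M → ℤ))
    (κ : (Fin N → ℤ) → (Fin N → ℤ) → Prop) (lam : (Fin M → ℤ) → (Fin M → ℤ) → Prop)
    (hκ : IsAdjacency κ) (hlam : IsAdjacency lam)
    (p : (Fin N → ℤ) → (Fin M → ℤ))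
    (hmaps : Set.MapsTo p E Bs) (hsurj : Set.SurjOn p E Bs)
    (hcont : DigContOn p E κ lam) (hupl : UPL p E Bs κ lam)
    (e : Fin N → ℤ) (b : Fin M → ℤ) (he : e ∈ E) (hb : b ∈ Bs)
    (hladj : lam (p e) b) :
    ∃! e' : Fin N → ℤ, e' ∈ E ∧ p e' = b ∧ κ e e' :=
  prop_3_4_iv_general E Bs κ lam hκ hlam p hmaps hupl e b he hb hladj
end

section
/- Let p : (E,κ) → (B,λ) be a (κ,λ)-continuous surjection between digital images which is a local (κ,λ)-isomorphism. Then p has the digital path lifting property: every λ-path α : [0,m]_ℤ → B and every e₀ ∈ p⁻¹(α(0)) admit a lifting α̃ : [0,m]_ℤ → E with α̃(0) = e₀. (Claim proved inside Theorem 4.2) -/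
/-!
A path is lifted one edge at a time. If `g` lifts the first `n` steps of `a` and ends at `g n`,
the edge from `a n` to `a (n + 1)` shows `a (n + 1) ∈ N_λ(p (g n), 1)`; since `p` maps
`N_κ(g n, 1)` onto `N_λ(p (g n), 1)`, some `x ∈ N_κ(g n, 1)` lies over `a (n + 1)`, and
appending `x` to `g` extends the lift.
-/

open Set

theorem adj2_iff {i j : ℤ} : adj2 i j ↔ j = i + 1 ∨ i = j + 1 := by
  unfold adj2
  rw [abs_eq zero_le_one]
  omega

section DigitalPath

variable {A : Type*} {X : Set A} {κ : A → A → Prop}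

theorem isDigPath_const {m : ℕ} {x : A} (hx : x ∈ X) : IsDigPath X κ m fun _ => x :=
  ⟨fun _ _ => hx, fun _ _ _ _ _ => Or.inl rfl⟩

theorem IsDigPath.mono {m n : ℕ} {f : ℤ → A} (hf : IsDigPath X κ m f) (hnm : n ≤ m) :
    IsDigPath X κ n f := by
  have sub : Icc (0 : ℤ) n ⊆ Icc 0 m := Icc_subset_Icc_right (by exact_mod_cast hnm)
  exact ⟨fun i hi => hf.1 i (sub hi), fun i hi j hj => hf.2 i (sub hi) j (sub hj)⟩

theorem IsDigPath.shift {m n k : ℕ} {f : ℤ → A} (hf : IsDigPath X κ m f) (h : k + n ≤ m) :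
    IsDigPath X κ n fun j => f (j + k) := by
  have hmem : ∀ j ∈ Icc (0 : ℤ) n, j + k ∈ Icc (0 : ℤ) m := fun j ⟨hj0, hjn⟩ =>
    ⟨by positivity, by omega⟩
  refine ⟨fun j hj => hf.1 _ (hmem j hj), fun i hi j hj hij => hf.2 _ (hmem i hi) _ (hmem j hj) ?_⟩
  simpa [adj2] using hij

theorem IsDigPath.reachIn_succ {m k : ℕ} {f : ℤ → A} (hf : IsDigPath X κ m f) (hk : k < m) :
    ReachIn X κ (f k) (f (k + 1)) 1 :=
  ⟨_, hf.shift hk, by simp, by push_cast; rw [add_comm]⟩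

theorem reachIn_self {m : ℕ} {x : A} (hx : x ∈ X) : ReachIn X κ x x m :=
  ⟨_, isDigPath_const hx, rfl, rfl⟩

theorem ReachIn.mem_nbhd {m ε : ℕ} {x y : A} (hxy : ReachIn X κ x y m) (hm : m ≤ ε) :
    y ∈ Nbhd X κ x ε := by
  obtain ⟨f, hf, hf0, hfm⟩ := hxy
  exact Or.inl ⟨hfm ▸ hf.1 m ⟨by positivity, le_rfl⟩, m, hm, f, hf, hf0, hfm⟩

theorem reachIn_one_of_mem_nbhd_one {x y : A} (hx : x ∈ X) (hy : y ∈ Nbhd X κ x 1) :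
    ReachIn X κ x y 1 := by
  rcases hy with ⟨-, m, hm, hxy⟩ | rfl
  · interval_cases m
    · obtain ⟨f, -, hf0, hf1⟩ := hxy
      obtain rfl : x = y := hf0.symm.trans hf1
      exact reachIn_self hx
    · exact hxy
  · exact reachIn_self hx

theorem IsDigPath.snoc {n : ℕ} {g : ℤ → A} {x : A} (hg : IsDigPath X κ n g)
    (hx : ReachIn X κ (g n) x 1) :
    IsDigPath X κ (n + 1) fun j => if j ≤ n then g j else x := by
  obtain ⟨s, hs, hs0, hs1⟩ := hx
  have h0 : (0 : ℤ) ∈ Icc 0 ((1 : ℕ) : ℤ) := by simp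
  have h1 : (1 : ℤ) ∈ Icc 0 ((1 : ℕ) : ℤ) := by simp
  have forward : g n = x ∨ κ (g n) x := hs0 ▸ hs1 ▸ hs.2 0 h0 1 h1 (by simp [adj2])
  have backward : x = g n ∨ κ x (g n) := hs0 ▸ hs1 ▸ hs.2 1 h1 0 h0 (by simp [adj2])
  refine ⟨fun i hi => ?_, fun i hi j hj hij => ?_⟩
  · dsimp only
    split_ifs with hin
    · exact hg.1 i ⟨hi.1, hin⟩
    · exact hs1 ▸ hs.1 1 h1
  · simp only [mem_Icc, Nat.cast_succ] at hi hj
    rw [adj2_iff] at hij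
    dsimp only
    split_ifs with hin hjn hjn
    · exact hg.2 i ⟨hi.1, hin⟩ j ⟨hj.1, hjn⟩ (adj2_iff.2 hij)
    · obtain rfl : i = n := by omega
      exact forward
    · obtain rfl : j = n := by omega
      exact backward
    · omega

end DigitalPath

theorem IsLocalIso.exists_lift_of_reachIn_one {A B : Type*} {p : A → B} {E : Set A}
    {Bs : Set B} {κ : A → A → Prop} {lam : B → B → Prop} (hloc : IsLocalIso p E Bs κ lam 1)
    {e : A} {b : B} (he : e ∈ E) (hb : ReachIn Bs lam (p e) b 1) :
    ∃ x, p x = b ∧ ReachIn E κ e x 1 := by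
  obtain ⟨x, hxN, hpx⟩ := (hloc e he).2.2.1 (hb.mem_nbhd le_rfl)
  exact ⟨x, hpx, reachIn_one_of_mem_nbhd_one he hxN⟩

theorem local_iso_path_lifting_general {N M : ℕ} (E : Set (Fin N → ℤ)) (Bs : Set (Fin M → ℤ))
    (κ : (Fin N → ℤ) → (Fin N → ℤ) → Prop) (lam : (Fin M → ℤ) → (Fin M → ℤ) → Prop)
    (p : (Fin N → ℤ) → (Fin M → ℤ))
    (hloc : IsLocalIso p E Bs κ lam 1) :
    PathLiftingProp p E Bs κ lam := by
  intro m
  induction m with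
  | zero =>
    intro a _ e he hea
    refine ⟨fun _ => e, isDigPath_const he, fun i hi => ?_, rfl⟩
    obtain rfl : i = 0 := by simp only [mem_Icc, Nat.cast_zero] at hi; omega
    exact hea
  | succ n ih =>
    intro a ha e he hea
    obtain ⟨g, hg, hpg, hg0⟩ := ih a (ha.mono n.le_succ) e he hea
    have hn : (n : ℤ) ∈ Icc 0 (n : ℤ) := ⟨by positivity, le_rfl⟩
    obtain ⟨x, hpx, hx⟩ := hloc.exists_lift_of_reachIn_one (hg.1 n hn)
      ((hpg n hn).symm ▸ ha.reachIn_succ n.lt_succ_self)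
    refine ⟨_, hg.snoc hx, fun i hi => ?_, by simp [hg0]⟩
    simp only [mem_Icc, Nat.cast_succ] at hi
    split_ifs with hin
    · exact hpg i ⟨hi.1, hin⟩
    · obtain rfl : i = n + 1 := by omega
      exact hpx

/-- Claim inside Theorem 4.2: a `(κ,λ)`-continuous surjection between digital images which
is a local `(κ,λ)`-isomorphism has the digital path lifting property. -/
theorem local_iso_path_lifting {N M : ℕ} (E : Set (Fin N → ℤ)) (Bs : Set (Fin M → ℤ))
    (κ : (Fin N → ℤ) → (Fin N → ℤ) → Prop) (lam : (Fin M → ℤ) → (Fin M → ℤ) → Prop)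
    (hκ : IsAdjacency κ) (hlam : IsAdjacency lam)
    (p : (Fin N → ℤ) → (Fin M → ℤ))
    (hmaps : Set.MapsTo p E Bs) (hsurj : Set.SurjOn p E Bs)
    (hcont : DigContOn p E κ lam)
    (hloc : IsLocalIso p E Bs κ lam 1) :
    PathLiftingProp p E Bs κ lam :=
  local_iso_path_lifting_general E Bs κ lam p hloc
end
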